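/- For the 1-safe Petri net constructed from a CSP instance with domain size dom and degree deg (maximum number of constraints any variable appears in), the benefit depth is at most 2 + deg·(dom + 1). -/

import Mathlib

/-- A Petri net: places `P`, transitions `T`, incidence functions. -/
structure PetriNet (P T : Type) where
  Pre : P → T → ℕ
  Post : P → T → ℕ

variable {P T : Type}

def enabled (N : PetriNet P T) (M : P → ℕ) (t : T) : Prop := ∀ p, N.Pre p t ≤ M p

def fire (N : PetriNet P T) (M : P → ℕ) (t : T) : P → ℕ :=
  fun p => M p - N.Pre p t + N.Post p t

def step (N : PetriNet P T) (M M' : P → ℕ) : Prop :=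
  ∃ t, enabled N M t ∧ M' = fire N M t

def reachable (N : PetriNet P T) (M0 M : P → ℕ) : Prop :=
  Relation.ReflTransGen (step N) M0 M

/-- `1`-safety: every reachable marking has at most one token per place. -/
def oneSafe (N : PetriNet P T) (M0 : P → ℕ) : Prop :=
  ∀ M, reachable N M0 M → ∀ p, M p ≤ 1

def incident (N : PetriNet P T) (p : P) (t : T) : Prop := 1 ≤ N.Pre p t + N.Post p t


/-- A CSP instance with `n` variables, `m` constraints and domain `Fin dom`: each
constraint has a scope and a set of admissible tuples (given as assignments, compared
only on the scope). -/
structure CSP (n m dom : ℕ) where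
  scope : Fin m → Finset (Fin n)
  adm : Fin m → Finset (Fin n → Fin dom)

/-- Places of the net constructed from a CSP instance. -/
inductive CPl (n m dom : ℕ) : Type
  | q (i : Fin n)
  | qv (i : Fin n) (j : Fin m) (d : Fin dom)
  | C (j : Fin m)
  | g
deriving DecidableEq

/-- Transitions of the net constructed from a CSP instance. -/
inductive CTr (n m dom : ℕ) : Type
  | t (i : Fin n) (d : Fin dom)
  | tc (i : Fin n) (j : Fin m) (d : Fin dom)
  | con (j : Fin m) (f : Fin n → Fin dom)
  | fin

variable {n m dom : ℕ}

/-- Input incidence of the CSP net: `t i d` consumes the token of `q i`; the cleanup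
`tc i j d` consumes a token from `q[i]_j^d`; the constraint-check `con j f` (for an
admissible tuple `f`) consumes the tokens `q[i]_j^{f i}` for the variables of its
scope (non-admissible tuples are blocked); `fin` consumes one token from each `C j`. -/
def cspPre (I : CSP n m dom) : CPl n m dom → CTr n m dom → ℕ := fun p τ =>
  match τ with
  | .t i _ => if p = .q i then 1 else 0
  | .tc i j d => if p = .qv i j d then 1 else 0
  | .con j f => if f ∈ I.adm j then (if ∃ i ∈ I.scope j, p = .qv i j (f i) then 1 else 0)
      else (if p = .C j then 2 else 0)
  | .fin => if ∃ j, p = .C j then 1 else 0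

/-- Output incidence of the CSP net: `t i d` puts a token in `q[i]_j^d` for every
constraint `j` containing `i`; `con j f` puts a token in `C j`; `fin` puts a token
in `g`. -/
def cspPost (I : CSP n m dom) : CPl n m dom → CTr n m dom → ℕ := fun p τ =>
  match τ with
  | .t i d => if ∃ j, i ∈ I.scope j ∧ p = .qv i j d then 1 else 0
  | .tc _ _ _ => 0
  | .con j f => if f ∈ I.adm j then (if p = .C j then 1 else 0) else 0
  | .fin => if p = .g then 1 else 0

/-- The Petri net constructed from the CSP instance. -/
def cspNet (I : CSP n m dom) : PetriNet (CPl n m dom) (CTr n m dom) :=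
  ⟨cspPre I, cspPost I⟩

/-- `flows p p'`: `p'` is an output place of an output transition of `p`. -/
def flows (N : PetriNet P T) (p p' : P) : Prop :=
  ∃ t, N.Pre p t = 1 ∧ N.Post p' t = 1

/-- The set of places benefited by `p`: the smallest set containing `p` and closed
under taking output places of output transitions. -/
def ben (N : PetriNet P T) (p : P) : Set P :=
  {p' | Relation.ReflTransGen (flows N) p p'}

/-!
Every arc of the `flows` relation of the CSP net goes one layer down the chain
`q i → q[i]_j^d → C j → g`, and an arc `q i → q[i]_j^d` exists only when `i` lies in the
scope of `j`. Hence `ben (q i)` lies in `{q i, g} ∪ ⋃_{j ∋ i} ({C j} ∪ {q[i]_j^d | d})`,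
of size at most `2 + deg·(dom + 1)`. The lower layers benefit at most three places, and
`q[i]_j^d` benefits more than itself only if `i` lies in the scope of `j`, forcing `deg ≥ 1`.
-/

open Finset

lemma ben_subset_of_flows {N : PetriNet P T} (S : P → Set P) (hself : ∀ p, p ∈ S p)
    (hflows : ∀ a b, flows N a b → S b ⊆ S a) (p : P) : ben N p ⊆ S p := by
  intro x hx
  induction hx using Relation.ReflTransGen.head_induction_on with
  | refl => exact hself x
  | head hpa _ ih => exact hflows _ _ hpa ih

namespace CSP

variable (I : CSP n m dom)

lemma flows_cspNet_cases {p p' : CPl n m dom} (h : flows (cspNet I) p p') :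
    (∃ i j d, p = .q i ∧ p' = .qv i j d ∧ i ∈ I.scope j) ∨
    (∃ i j d, p = .qv i j d ∧ p' = .C j ∧ i ∈ I.scope j) ∨
    (∃ j, p = .C j ∧ p' = .g) := by
  obtain ⟨t, hpre, hpost⟩ := h
  cases t with
  | t i d =>
    have hp : p = .q i := by by_contra hc; simp [cspNet, cspPre, hc] at hpre
    obtain ⟨j, hj, hp'⟩ : ∃ j, i ∈ I.scope j ∧ p' = .qv i j d := by
      by_contra hc; simp [cspNet, cspPost, hc] at hpost
    exact Or.inl ⟨i, j, d, hp, hp', hj⟩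
  | tc i j d => simp [cspNet, cspPost] at hpost
  | con j f =>
    have hf : f ∈ I.adm j := by by_contra hc; simp [cspNet, cspPost, hc] at hpost
    have hp' : p' = .C j := by by_contra hc; simp [cspNet, cspPost, hf, hc] at hpost
    obtain ⟨i, hi, hp⟩ : ∃ i ∈ I.scope j, p = .qv i j (f i) := by
      by_contra hc; simp [cspNet, cspPre, hf, hc] at hpre
    exact Or.inr (Or.inl ⟨i, j, f i, hp, hp', hi⟩)
  | fin =>
    obtain ⟨j, hp⟩ : ∃ j, p = .C j := by by_contra hc; simp [cspNet, cspPre, hc] at hpre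
    have hp' : p' = .g := by by_contra hc; simp [cspNet, cspPost, hc] at hpost
    exact Or.inr (Or.inr ⟨j, hp, hp'⟩)

def constraintsOf (i : Fin n) : Finset (Fin m) :=
  univ.filter fun j => i ∈ I.scope j

/-- Supersets of the benefit sets. A place `q[i]_j^d` with `i` outside the scope of `j`
has no output arc, and the `if` keeps its bound at one place, as needed when `deg = 0`. -/
def benBound : CPl n m dom → Finset (CPl n m dom)
  | .q i => insert (.q i) (insert .g
      ((I.constraintsOf i).biUnion fun j => insert (.C j) (univ.image (.qv i j))))
  | .qv i j d => if i ∈ I.scope j then {.qv i j d, .C j, .g} else {.qv i j d}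
  | .C j => {.C j, .g}
  | .g => {.g}

lemma mem_benBound_self (p : CPl n m dom) : p ∈ I.benBound p := by
  cases p with
  | qv i j d => simp only [benBound]; split_ifs <;> simp
  | _ => simp [benBound]

lemma benBound_subset_of_flows {a b : CPl n m dom} (h : flows (cspNet I) a b) :
    I.benBound b ⊆ I.benBound a := by
  rcases I.flows_cspNet_cases h with ⟨i, j, d, rfl, rfl, hij⟩ | ⟨i, j, d, rfl, rfl, hij⟩ |
    ⟨j, rfl, rfl⟩
  · have hj : j ∈ I.constraintsOf i := by simp [constraintsOf, hij]
    simp only [benBound, if_pos hij, insert_subset_iff, mem_insert, mem_biUnion, mem_image]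
    exact ⟨Or.inr (Or.inr ⟨j, hj, Or.inr ⟨d, mem_univ _, rfl⟩⟩),
      Or.inr (Or.inr ⟨j, hj, Or.inl rfl⟩), by simp⟩
  · simp [benBound, if_pos hij]
  · simp [benBound]

lemma card_benBound_le {deg : ℕ} (hdeg : ∀ i, (I.constraintsOf i).card ≤ deg)
    (p : CPl n m dom) : (I.benBound p).card ≤ 2 + deg * (dom + 1) := by
  cases p with
  | q i =>
    have hlayer : ∀ j : Fin m,
        (insert (CPl.C j) (univ.image (CPl.qv i j))).card ≤ dom + 1 := fun j =>
      (card_insert_le _ _).trans (by simpa using card_image_le (s := (univ : Finset (Fin dom))))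
    calc (I.benBound (.q i)).card
        ≤ 2 + ((I.constraintsOf i).biUnion fun j =>
            insert (CPl.C j) (univ.image (CPl.qv i j))).card := by
          simp only [benBound]
          grw [card_insert_le, card_insert_le]
          omega
      _ ≤ 2 + ∑ _j ∈ I.constraintsOf i, (dom + 1) := by
          gcongr; exact card_biUnion_le.trans (sum_le_sum fun j _ => hlayer j)
      _ ≤ 2 + deg * (dom + 1) := by
          rw [sum_const, smul_eq_mul]; gcongr; exact hdeg i
  | qv i j d =>
    simp only [benBound]
    split_ifs with hij
    · have hdeg_pos : 0 < deg :=
        (card_pos.mpr ⟨j, by simp [constraintsOf, hij]⟩).trans_le (hdeg i)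
      have hdom_pos : 0 < dom := d.pos
      have : 1 ≤ deg * (dom + 1) := Nat.one_le_iff_ne_zero.mpr (by positivity)
      linarith [card_le_three (a := CPl.qv i j d) (b := .C j) (c := (.g : CPl n m dom))]
    · rw [card_singleton]; omega
  | C j => exact card_le_two.trans (by omega)
  | g => rw [benBound, card_singleton]; omega

end CSP

/-- The benefit depth of the net constructed from a CSP instance with domain size
`dom` and degree `deg` is at most `2 + deg·(dom + 1)`. -/
theorem cspNet_benefit_depth_le (I : CSP n m dom) (deg : ℕ)
    (hdeg : ∀ i : Fin n, (Finset.univ.filter fun j => i ∈ I.scope j).card ≤ deg) :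
    ∀ p : CPl n m dom, Set.ncard (ben (cspNet I) p) ≤ 2 + deg * (dom + 1) := by
  intro p
  have hsub : ben (cspNet I) p ⊆ I.benBound p :=
    ben_subset_of_flows (fun p => I.benBound p) I.mem_benBound_self
      (fun _ _ h => by exact_mod_cast I.benBound_subset_of_flows h) p
  calc Set.ncard (ben (cspNet I) p) ≤ Set.ncard (I.benBound p : Set (CPl n m dom)) :=
        Set.ncard_le_ncard hsub (I.benBound p).finite_toSet
    _ = (I.benBound p).card := Set.ncard_coe_finset _
    _ ≤ 2 + deg * (dom + 1) := I.card_benBound_le hdeg p
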